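/- Gyöngy–Krylov criterion: let (X_n) be a sequence of random elements of a Polish space E. Then X_n converges in probability to some E-valued random element if and only if for every pair of subsequences (X_{ℓ(k)}, X_{m(k)}), there is a further subsequence whose joint laws converge weakly to a probability measure on E × E supported on the diagonal {(x,y) : x = y}. -/

import Mathlib

open MeasureTheory Filter Topology
open scoped ENNReal BoundedContinuousFunction

/-!
If `X → Y` in probability, then every pair `(X ∘ l, X ∘ m)` tends to `(Y, Y)` in probability,
hence in law, and the law of `(Y, Y)` lives on the diagonal.

Conversely, the portmanteau theorem applied to the closed set `{(x, y) | ε ≤ d(x, y)}`, which a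
law on the diagonal does not charge, shows that no pair of subsequences stays `ε`-apart with
probability at least `δ`: the sequence is Cauchy in probability. Borel–Cantelli then yields a
subsequence that is almost surely Cauchy, its almost sure limit in the complete space `E` is a
limit in probability of that subsequence, and hence of the whole Cauchy sequence.
-/

namespace Filter

theorem extraction_prod_of_frequently_atTop {P : ℕ → ℕ → Prop}
    (h : ∃ᶠ p : ℕ × ℕ in atTop, P p.1 p.2) :
    ∃ φ ψ : ℕ → ℕ, StrictMono φ ∧ StrictMono ψ ∧ ∀ k, P (φ k) (ψ k) := by
  choose u hu hP using frequently_atTop.mp h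
  -- `r (k + 1)` exceeds both coordinates of the `k`-th witness.
  let r : ℕ → ℕ := fun k => Nat.rec 0 (fun _ n => max (u (n, n)).1 (u (n, n)).2 + 1) k
  refine ⟨fun k => (u (r k, r k)).1, fun k => (u (r k, r k)).2,
    strictMono_nat_of_lt_succ fun k => ?_, strictMono_nat_of_lt_succ fun k => ?_,
    fun k => hP _⟩
  · exact (Nat.lt_succ_of_le (le_max_left _ _)).trans_le (hu (r (k + 1), r (k + 1))).1
  · exact (Nat.lt_succ_of_le (le_max_right _ _)).trans_le (hu (r (k + 1), r (k + 1))).2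

end Filter

theorem cauchySeq_of_eventually_edist_le_of_tsum_ne_top {α : Type*} [PseudoEMetricSpace α]
    {u : ℕ → α} (d : ℕ → ℝ≥0∞) (hu : ∀ᶠ n in atTop, edist (u n) (u (n + 1)) ≤ d n)
    (hd : ∑' n, d n ≠ ∞) : CauchySeq u := by
  obtain ⟨K, hK⟩ := eventually_atTop.mp hu
  refine (cauchySeq_shift K).mp <| cauchySeq_of_edist_le_of_tsum_ne_top (fun n => d (n + K))
    (fun n => ?_) (ne_top_of_le_ne_top hd
      (ENNReal.tsum_comp_le_tsum_of_injective (add_left_injective K) d))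
  have := hK (n + K) (Nat.le_add_left K n)
  rwa [add_right_comm n K 1] at this

namespace MeasureTheory

variable {α ι E : Type*} [MeasurableSpace α] {μ : Measure α}

section PseudoEMetricSpace

variable [PseudoEMetricSpace E]

theorem measure_le_edist_le_add (μ : Measure α) (f g h : α → E) (ε : ℝ≥0∞) :
    μ {x | ε ≤ edist (f x) (h x)} ≤
      μ {x | ε / 2 ≤ edist (f x) (g x)} + μ {x | ε / 2 ≤ edist (g x) (h x)} := by
  refine (measure_mono fun x hx => ?_).trans (measure_union_le _ _)
  by_contra hx'
  simp only [Set.mem_ofPred_eq, Set.mem_union, not_or, not_le] at hx hx'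
  have := (hx.trans (edist_triangle _ (g x) _)).trans_lt (ENNReal.add_lt_add hx'.1 hx'.2)
  rw [ENNReal.add_halves] at this
  exact this.false

theorem TendstoInMeasure.prodMk {F : Type*} [PseudoEMetricSpace F] {l : Filter ι}
    {f : ι → α → E} {g : α → E} {f' : ι → α → F} {g' : α → F}
    (hf : TendstoInMeasure μ f l g) (hf' : TendstoInMeasure μ f' l g') :
    TendstoInMeasure μ (fun i x => (f i x, f' i x)) l (fun x => (g x, g' x)) := by
  intro ε hε
  have hsum := (hf ε hε).add (hf' ε hε)
  rw [add_zero] at hsum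
  refine tendsto_of_tendsto_of_tendsto_of_le_of_le tendsto_const_nhds hsum (fun i => zero_le)
    fun i => (measure_mono fun x hx => ?_).trans (measure_union_le _ _)
  simpa only [Set.mem_union, Set.mem_ofPred_eq, Prod.edist_eq, le_max_iff] using hx

variable [MeasurableSpace E] [BorelSpace E] [IsProbabilityMeasure μ] {l : Filter ι}

theorem TendstoInMeasure.tendsto_integral_boundedContinuousFunction
    [l.IsCountablyGenerated] [l.NeBot] {f : ι → α → E} {g : α → E}
    (h : TendstoInMeasure μ f l g) (hf : ∀ i, AEMeasurable (f i) μ) (φ : E →ᵇ ℝ) :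
    Tendsto (fun i => ∫ x, φ (f i x) ∂μ) l (𝓝 (∫ x, φ (g x) ∂μ)) := by
  have hd := h.tendstoInDistribution hf
  convert ProbabilityMeasure.tendsto_iff_forall_integral_tendsto.mp hd.tendsto φ using 2
  · exact (integral_map (hf _) φ.continuous.aestronglyMeasurable).symm
  · exact (integral_map hd.aemeasurable_limit φ.continuous.aestronglyMeasurable).symm

theorem tendsto_measure_le_edist_of_tendsto_integral [SecondCountableTopology E]
    {f g : ι → α → E} (hf : ∀ i, AEMeasurable (f i) μ) (hg : ∀ i, AEMeasurable (g i) μ)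
    {ν : Measure (E × E)} [IsProbabilityMeasure ν] (hν : ∀ᵐ p ∂ν, p.1 = p.2)
    (h : ∀ φ : E × E →ᵇ ℝ, Tendsto (fun i => ∫ x, φ (f i x, g i x) ∂μ) l (𝓝 (∫ p, φ p ∂ν)))
    {ε : ℝ≥0∞} (hε : 0 < ε) :
    Tendsto (fun i => μ {x | ε ≤ edist (f i x) (g i x)}) l (𝓝 0) := by
  let F : Set (E × E) := {p | ε ≤ edist p.1 p.2}
  have hF : IsClosed F := isClosed_le continuous_const (continuous_fst.edist continuous_snd)
  have hνF : ν F = 0 := by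
    refine measure_mono_null ?_ (ae_iff.mp hν)
    intro p hp hdiag
    rw [Set.mem_ofPred_eq, hdiag, edist_self] at hp
    exact hε.not_ge hp
  have hfg : ∀ i, AEMeasurable (fun x => (f i x, g i x)) μ := fun i => (hf i).prodMk (hg i)
  let laws : ι → ProbabilityMeasure (E × E) := fun i =>
    ⟨μ.map fun x => (f i x, g i x), Measure.isProbabilityMeasure_map (hfg i)⟩
  have hlaws : Tendsto laws l (𝓝 ⟨ν, inferInstance⟩) :=
    ProbabilityMeasure.tendsto_iff_forall_integral_tendsto.mpr fun φ => by
      simpa only [laws, ProbabilityMeasure.coe_mk,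
        integral_map (hfg _) φ.continuous.aestronglyMeasurable] using h φ
  have hlimsup := ProbabilityMeasure.limsup_measure_closed_le_of_tendsto hlaws hF
  simp only [laws, ProbabilityMeasure.coe_mk, hνF,
    Measure.map_apply_of_aemeasurable (hfg _) hF.measurableSet] at hlimsup
  exact tendsto_of_le_liminf_of_limsup_le zero_le hlimsup

end PseudoEMetricSpace

def CauchyInMeasure [EDist E] (μ : Measure α) (f : ℕ → α → E) : Prop :=
  ∀ ε, 0 < ε → Tendsto (fun p : ℕ × ℕ => μ {x | ε ≤ edist (f p.1 x) (f p.2 x)}) atTop (𝓝 0)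

section CauchyInMeasure

variable [PseudoEMetricSpace E] {f : ℕ → α → E}

theorem cauchyInMeasure_of_forall_exists_subseq
    (h : ∀ l m : ℕ → ℕ, StrictMono l → StrictMono m → ∃ n : ℕ → ℕ, ∀ ε, 0 < ε →
      Tendsto (fun k => μ {x | ε ≤ edist (f (l (n k)) x) (f (m (n k)) x)}) atTop (𝓝 0)) :
    CauchyInMeasure μ f := by
  intro ε hε
  by_contra hf
  obtain ⟨δ, hδ, hfreq⟩ : ∃ δ > 0,
      ∃ᶠ p : ℕ × ℕ in atTop, δ < μ {x | ε ≤ edist (f p.1 x) (f p.2 x)} := by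
    simpa only [ENNReal.tendsto_atTop_zero, not_forall, not_exists, not_le, exists_prop,
      frequently_atTop] using hf
  obtain ⟨l, m, hl, hm, hlm⟩ := extraction_prod_of_frequently_atTop
    (P := fun a b => δ < μ {x | ε ≤ edist (f a x) (f b x)}) hfreq
  obtain ⟨n, hn⟩ := h l m hl hm
  obtain ⟨k, hk⟩ := ((hn ε hε).eventually (gt_mem_nhds hδ)).exists
  exact (hlm (n k)).not_gt hk

theorem CauchyInMeasure.exists_strictMono_measure_lt (hf : CauchyInMeasure μ f)
    {ε δ : ℕ → ℝ≥0∞} (hε : ∀ k, 0 < ε k) (hδ : ∀ k, 0 < δ k) :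
    ∃ φ : ℕ → ℕ, StrictMono φ ∧
      ∀ k, μ {x | ε k ≤ edist (f (φ k) x) (f (φ (k + 1)) x)} < δ k := by
  choose N hN using fun k => eventually_atTop_prod_self'.mp
    ((hf (ε k) (hε k)).eventually (gt_mem_nhds (hδ k)))
  obtain ⟨φ, hφ, hNφ⟩ := extraction_forall_of_eventually' (P := fun k n => N k ≤ n)
    fun k => ⟨N k, fun _ => id⟩
  exact ⟨φ, hφ, fun k => hN k _ (hNφ k) _ ((hNφ k).trans (hφ k.lt_succ_self).le)⟩

theorem CauchyInMeasure.exists_strictMono_ae_cauchySeq (hf : CauchyInMeasure μ f) :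
    ∃ φ : ℕ → ℕ, StrictMono φ ∧ ∀ᵐ x ∂μ, CauchySeq fun k => f (φ k) x := by
  have hpos : ∀ k, (0 : ℝ≥0∞) < 2⁻¹ ^ k := fun k => ENNReal.pow_pos (by simp) k
  obtain ⟨φ, hφ, hφμ⟩ := hf.exists_strictMono_measure_lt hpos hpos
  have hsum : ∑' k, (2⁻¹ : ℝ≥0∞) ^ k ≠ ∞ := by
    rw [ENNReal.tsum_geometric, ENNReal.one_sub_inv_two, inv_inv]
    exact ENNReal.ofNat_ne_top
  refine ⟨φ, hφ, ?_⟩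
  filter_upwards [ae_eventually_notMem (ne_top_of_le_ne_top hsum
    (ENNReal.tsum_le_tsum fun k => (hφμ k).le))] with x hx
  refine cauchySeq_of_eventually_edist_le_of_tsum_ne_top _ (hx.mono fun k hk => ?_) hsum
  exact (not_le.mp hk).le

theorem CauchyInMeasure.tendstoInMeasure_of_subseq (hf : CauchyInMeasure μ f) {φ : ℕ → ℕ}
    (hφ : Tendsto φ atTop atTop) {g : α → E} (hg : TendstoInMeasure μ (fun k => f (φ k)) atTop g) :
    TendstoInMeasure μ f atTop g := by
  intro ε hε
  rw [ENNReal.tendsto_atTop_zero]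
  intro δ hδ
  have hε2 : 0 < ε / 2 := ENNReal.half_pos hε.ne'
  have hδ2 : 0 < δ / 2 := ENNReal.half_pos hδ.ne'
  obtain ⟨N, hN⟩ := eventually_atTop_prod_self'.mp
    ((hf _ hε2).eventually (eventually_le_nhds hδ2))
  obtain ⟨k, hk, hNk⟩ := (((hg _ hε2).eventually (eventually_le_nhds hδ2)).and
    (hφ.eventually_ge_atTop N)).exists
  refine ⟨N, fun n hn => ?_⟩
  calc μ {x | ε ≤ edist (f n x) (g x)}
      ≤ μ {x | ε / 2 ≤ edist (f n x) (f (φ k) x)} + μ {x | ε / 2 ≤ edist (f (φ k) x) (g x)} :=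
        measure_le_edist_le_add μ _ _ _ ε
    _ ≤ δ / 2 + δ / 2 := add_le_add (hN n hn _ hNk) hk
    _ = δ := ENNReal.add_halves δ

theorem CauchyInMeasure.exists_tendstoInMeasure [CompleteSpace E] [MeasurableSpace E]
    [BorelSpace E] [IsFiniteMeasure μ] (hf : CauchyInMeasure μ f)
    (hmeas : ∀ n, AEStronglyMeasurable (f n) μ) :
    ∃ g : α → E, Measurable g ∧ TendstoInMeasure μ f atTop g := by
  obtain ⟨φ, hφ, hcauchy⟩ := hf.exists_strictMono_ae_cauchySeq
  obtain ⟨g, hg, hlim⟩ := measurable_limit_of_tendsto_metrizable_ae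
    (fun k => (hmeas (φ k)).aemeasurable) (hcauchy.mono fun _ => cauchySeq_tendsto_of_complete)
  exact ⟨g, hg, hf.tendstoInMeasure_of_subseq hφ.tendsto_atTop
    (tendstoInMeasure_of_tendsto_ae (fun k => hmeas (φ k)) hlim)⟩

end CauchyInMeasure

end MeasureTheory

/-- Gyöngy–Krylov criterion.  Let `(X_n)` be random elements of a
Polish space `E`.  Then `X_n` converges in probability to some `E`-valued
random element iff for every pair of subsequences `(X_{ℓ(k)}, X_{m(k)})` there
is a further subsequence whose joint laws converge weakly (tested against
bounded continuous functions) to a probability measure on `E × E` supported on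
the diagonal. -/
theorem stmt_18 {E : Type*} [MetricSpace E] [CompleteSpace E]
    [SecondCountableTopology E] [MeasurableSpace E] [BorelSpace E]
    {Ω : Type*} [MeasurableSpace Ω] (P : Measure Ω) [IsProbabilityMeasure P]
    (X : ℕ → Ω → E) (hX : ∀ n, Measurable (X n)) :
    (∃ Y : Ω → E, Measurable Y ∧ TendstoInMeasure P X atTop Y) ↔
    (∀ l m : ℕ → ℕ, StrictMono l → StrictMono m →
      ∃ n : ℕ → ℕ, StrictMono n ∧
        ∃ μ : Measure (E × E), IsProbabilityMeasure μ ∧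
          μ {p : E × E | p.1 = p.2} = 1 ∧
          ∀ g : BoundedContinuousFunction (E × E) ℝ,
            Tendsto (fun k => ∫ ω, g (X (l (n k)) ω, X (m (n k)) ω) ∂P) atTop
              (nhds (∫ p, g p ∂μ))) := by
  have hdiag : MeasurableSet {p : E × E | p.1 = p.2} := isClosed_diagonal.measurableSet
  constructor
  · rintro ⟨Y, hY, hXY⟩ l m hl hm
    have hYY : Measurable fun ω => (Y ω, Y ω) := hY.prodMk hY
    refine ⟨id, strictMono_id, P.map fun ω => (Y ω, Y ω),
      Measure.isProbabilityMeasure_map hYY.aemeasurable, ?_, fun g => ?_⟩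
    · rw [Measure.map_apply hYY hdiag]
      simp
    · rw [integral_map hYY.aemeasurable g.continuous.aestronglyMeasurable]
      exact ((hXY.comp hl.tendsto_atTop).prodMk (hXY.comp hm.tendsto_atTop)
        ).tendsto_integral_boundedContinuousFunction
          (fun k => ((hX _).prodMk (hX _)).aemeasurable) g
  · intro H
    refine CauchyInMeasure.exists_tendstoInMeasure ?_ fun n => (hX n).aestronglyMeasurable
    refine cauchyInMeasure_of_forall_exists_subseq fun l m hl hm => ?_
    obtain ⟨n, -, μ, hμ, hμdiag, hconv⟩ := H l m hl hm
    have hμae : ∀ᵐ p ∂μ, p.1 = p.2 :=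
      (ae_iff_measure_eq hdiag.nullMeasurableSet).mpr (by rw [hμdiag, measure_univ])
    exact ⟨n, fun ε hε => tendsto_measure_le_edist_of_tendsto_integral
      (fun k => (hX _).aemeasurable) (fun k => (hX _).aemeasurable) hμae hconv hε⟩
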